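/- arXiv:1105.4122 — 2 statements merged into one kernel-verified Lean document; each statement's English description precedes it below -/
import Mathlib

section
/- Let K be a nonempty compact Hausdorff space and let μ : C(K) → ℝ be a normed, monotone, weakly additive functional that weakly preserves both max and min. Then s(μ) := {x ∈ K : {x} ∈ Λ_μ} is a closed subset of the support S(μ). Moreover, if μ preserves min, then A ∩ s(μ) ≠ ∅ for every A ∈ Λ_μ. -/
open Set

variable {K : Type*} [TopologicalSpace K]

/-- A functional `μ` on `C(K, ℝ)` is *normed* if `μ 1 = 1`. -/
def IsNormedFunctional (μ : C(K, ℝ) → ℝ) : Prop := μ 1 = 1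

/-- `μ` is *weakly additive* if `μ (f + c·1) = μ f + c`. -/
def IsWeaklyAdditive (μ : C(K, ℝ) → ℝ) : Prop :=
  ∀ (f : C(K, ℝ)) (c : ℝ), μ (f + ContinuousMap.const K c) = μ f + c

/-- `μ` is *monotone* if `f ≤ g → μ f ≤ μ g`. -/
def IsMonotoneFunctional (μ : C(K, ℝ) → ℝ) : Prop :=
  ∀ f g : C(K, ℝ), f ≤ g → μ f ≤ μ g

/-- `μ` *preserves max*. -/
def PreservesMax (μ : C(K, ℝ) → ℝ) : Prop :=
  ∀ f g : C(K, ℝ), μ (f ⊔ g) = max (μ f) (μ g)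

/-- `μ` *preserves min*. -/
def PreservesMin (μ : C(K, ℝ) → ℝ) : Prop :=
  ∀ f g : C(K, ℝ), μ (f ⊓ g) = min (μ f) (μ g)

/-- `μ` *weakly preserves max*: `μ (max{f, c·1}) = max{μ f, c}`. -/
def WeaklyPreservesMax (μ : C(K, ℝ) → ℝ) : Prop :=
  ∀ (f : C(K, ℝ)) (c : ℝ), μ (f ⊔ ContinuousMap.const K c) = max (μ f) c

/-- `μ` *weakly preserves min*: `μ (min{f, c·1}) = min{μ f, c}`. -/
def WeaklyPreservesMin (μ : C(K, ℝ) → ℝ) : Prop :=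
  ∀ (f : C(K, ℝ)) (c : ℝ), μ (f ⊓ ContinuousMap.const K c) = min (μ f) c

/-- The support `S(μ)`: points `x` such that every open neighbourhood `O` of `x` admits
`f, g ∈ C(K)` agreeing off `O` with `μ f ≠ μ g`. -/
def functionalSupport (μ : C(K, ℝ) → ℝ) : Set K :=
  {x | ∀ O : Set K, IsOpen O → x ∈ O →
    ∃ f g : C(K, ℝ), (∀ y ∉ O, f y = g y) ∧ μ f ≠ μ g}

/-- The family `𝒜_μ` of nonempty closed sets `A` such that `μ f = μ g` whenever `f = g` on `A`. -/
def AFamily (μ : C(K, ℝ) → ℝ) : Set (Set K) :=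
  {A | A.Nonempty ∧ IsClosed A ∧
    ∀ f g : C(K, ℝ), (∀ x ∈ A, f x = g x) → μ f = μ g}

/-- The family `Λ_μ`. -/
def LFamily (μ : C(K, ℝ) → ℝ) : Set (Set K) :=
  {A | A.Nonempty ∧ IsClosed A ∧
    ∀ B : Set K, IsClosed B → A ∩ B = ∅ →
      ∃ g : C(K, ℝ), μ g = 0 ∧ (∀ x ∈ A, g x ≤ 0) ∧ ∀ x ∈ B, 0 < g x}

/-!
The key point is that a functional with these properties cannot see nonnegative functions
it annihilates: if `u ≥ 0` and `μ u = 0`, then `μ (t • u) = 0` for every `t ≥ 0` (a doubling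
argument using the weak preservation of max and min). Hence if `A ∈ Λ_μ` and `f < μ f - δ`
on `A`, a large multiple of a nonnegative separating function for `A` and `{f ≥ μ f - δ / 2}`,
plus the constant `μ f - δ / 2`, dominates `f` while having value `μ f - δ / 2`. This shows
that every `f` satisfies `μ f ≤ f x` at some point `x ∈ A`. For a singleton this is the
characterisation `{x} ∈ Λ_μ ↔ ∀ f, μ f ≤ f x`, which exhibits `s(μ)` as an intersection of
closed sets and, by Urysohn's lemma, puts it inside `S(μ)`. When `μ` preserves min, the closed
sets `{x ∈ A | μ f ≤ f x}` form a directed family of nonempty compact sets, and any point of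
their intersection lies in `A ∩ s(μ)`.
-/

open ContinuousMap

variable {μ : C(K, ℝ) → ℝ}

theorem IsWeaklyAdditive.map_zero (hwa : IsWeaklyAdditive μ) (hnorm : IsNormedFunctional μ) :
    μ 0 = 0 := by
  have h := hwa 0 1
  rw [zero_add, const_one, hnorm] at h
  linarith

theorem IsMonotoneFunctional.map_nonneg (hmono : IsMonotoneFunctional μ) (h0 : μ 0 = 0)
    {u : C(K, ℝ)} (hu : 0 ≤ u) : 0 ≤ μ u :=
  h0 ▸ hmono 0 u hu

theorem map_two_smul_le_of_le_const (hmono : IsMonotoneFunctional μ) (hwa : IsWeaklyAdditive μ)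
    (hwmax : WeaklyPreservesMax μ) {v : C(K, ℝ)} {c : ℝ} (hv : 0 ≤ v) (hvc : v ≤ const K c)
    (hμv : μ v = 0) : μ ((2 : ℝ) • v) ≤ c := by
  have hle : (2 : ℝ) • v ⊔ const K c ≤ v + const K c := fun x ↦ by
    have h0 : 0 ≤ v x := hv x
    have h1 : v x ≤ c := hvc x
    change max (2 * v x) c ≤ v x + c
    exact max_le (by linarith) (by linarith)
  have := hmono _ _ hle
  rw [hwmax, hwa, hμv, zero_add] at this
  exact (le_max_left _ _).trans this

theorem map_two_smul_eq_zero (hnorm : IsNormedFunctional μ) (hmono : IsMonotoneFunctional μ)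
    (hwa : IsWeaklyAdditive μ) (hwmax : WeaklyPreservesMax μ) (hwmin : WeaklyPreservesMin μ)
    {u : C(K, ℝ)} (hu : 0 ≤ u) (hμu : μ u = 0) : μ ((2 : ℝ) • u) = 0 := by
  refine le_antisymm (le_of_forall_pos_le_add fun c hc ↦ ?_)
    (hmono.map_nonneg (hwa.map_zero hnorm) (smul_nonneg zero_le_two hu))
  have htrunc : μ ((2 : ℝ) • (u ⊓ const K c)) ≤ c :=
    map_two_smul_le_of_le_const hmono hwa hwmax (le_inf hu fun _ ↦ hc.le) inf_le_right
      (by rw [hwmin, hμu, min_eq_left hc.le])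
  have heq : (2 : ℝ) • (u ⊓ const K c) = (2 : ℝ) • u ⊓ const K (2 * c) := by
    ext x
    simp [mul_min_of_nonneg _ _ (zero_le_two (α := ℝ))]
  rw [heq, hwmin] at htrunc
  rw [zero_add]
  exact (min_le_iff.1 htrunc).resolve_right (by linarith)

theorem map_smul_eq_zero (hnorm : IsNormedFunctional μ) (hmono : IsMonotoneFunctional μ)
    (hwa : IsWeaklyAdditive μ) (hwmax : WeaklyPreservesMax μ) (hwmin : WeaklyPreservesMin μ)
    {u : C(K, ℝ)} (hu : 0 ≤ u) (hμu : μ u = 0) {t : ℝ} (ht : 0 ≤ t) : μ (t • u) = 0 := by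
  have hpow : ∀ n : ℕ, μ ((2 : ℝ) ^ n • u) = 0 := by
    intro n
    induction n with
    | zero => simpa using hμu
    | succ n ih =>
      rw [pow_succ', mul_smul]
      exact map_two_smul_eq_zero hnorm hmono hwa hwmax hwmin (smul_nonneg (by positivity) hu) ih
  obtain ⟨n, hn⟩ := pow_unbounded_of_one_lt t (one_lt_two (α := ℝ))
  refine le_antisymm ?_ (hmono.map_nonneg (hwa.map_zero hnorm) (smul_nonneg ht hu))
  exact hpow n ▸ hmono _ _ (smul_le_smul_of_nonneg_right hn.le hu)

theorem exists_nonneg_one_le_of_mem_LFamily [CompactSpace K] (hnorm : IsNormedFunctional μ)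
    (hmono : IsMonotoneFunctional μ) (hwa : IsWeaklyAdditive μ) (hwmax : WeaklyPreservesMax μ)
    (hwmin : WeaklyPreservesMin μ) {A B : Set K} (hA : A ∈ LFamily μ) (hB : IsClosed B)
    (hAB : A ∩ B = ∅) : ∃ u : C(K, ℝ), 0 ≤ u ∧ μ u = 0 ∧ ∀ x ∈ B, 1 ≤ u x := by
  obtain ⟨g, hμg, -, hgB⟩ := hA.2.2 B hB hAB
  obtain ⟨η, hη, hηB⟩ := hB.isCompact.exists_forall_le' g.continuous.continuousOn hgB
  have hpos : 0 ≤ g ⊔ const K 0 := le_sup_right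
  refine ⟨η⁻¹ • (g ⊔ const K 0), smul_nonneg (inv_nonneg.2 hη.le) hpos,
    map_smul_eq_zero hnorm hmono hwa hwmax hwmin hpos (by rw [hwmax, hμg, max_self])
      (inv_nonneg.2 hη.le), fun x hx ↦ ?_⟩
  change 1 ≤ η⁻¹ * max (g x) 0
  rw [le_inv_mul_iff₀ hη, mul_one]
  exact (hηB x hx).trans (le_max_left _ _)

theorem exists_map_le_apply_of_mem_LFamily [CompactSpace K] (hnorm : IsNormedFunctional μ)
    (hmono : IsMonotoneFunctional μ) (hwa : IsWeaklyAdditive μ) (hwmax : WeaklyPreservesMax μ)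
    (hwmin : WeaklyPreservesMin μ) {A : Set K} (hA : A ∈ LFamily μ) (f : C(K, ℝ)) :
    ∃ x ∈ A, μ f ≤ f x := by
  by_contra! hlt
  obtain ⟨ε, hε, hεA⟩ := hA.2.1.isCompact.exists_forall_le'
    (f := fun x ↦ μ f - f x) (by fun_prop) (a := 0) fun x hx ↦ sub_pos.2 (hlt x hx)
  have hAB : A ∩ f ⁻¹' Ici (μ f - ε / 2) = ∅ := eq_empty_of_forall_notMem fun x ⟨hxA, hxB⟩ ↦ by
    have h1 : ε ≤ μ f - f x := hεA x hxA
    have h2 : μ f - ε / 2 ≤ f x := hxB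
    linarith
  obtain ⟨u, hu, hμu, huB⟩ := exists_nonneg_one_le_of_mem_LFamily hnorm hmono hwa hwmax hwmin hA
    (isClosed_Ici.preimage f.continuous) hAB
  set t := max (‖f‖ - (μ f - ε / 2)) 0
  have ht : 0 ≤ t := le_max_right _ _
  have hdom : f ≤ t • u + const K (μ f - ε / 2) := fun x ↦ by
    change f x ≤ t * u x + (μ f - ε / 2)
    have htu : 0 ≤ t * u x := mul_nonneg ht (hu x)
    by_cases hx : μ f - ε / 2 ≤ f x
    · have h1 : t ≤ t * u x := le_mul_of_one_le_right ht (huB x hx)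
      have h2 : ‖f‖ - (μ f - ε / 2) ≤ t := le_max_left _ _
      linarith [f.apply_le_norm x]
    · linarith
  have := hmono _ _ hdom
  rw [hwa, map_smul_eq_zero hnorm hmono hwa hwmax hwmin hu hμu ht] at this
  linarith

theorem singleton_mem_LFamily_of_forall_map_le [T1Space K] [NormalSpace K]
    (hnorm : IsNormedFunctional μ) (hmono : IsMonotoneFunctional μ) (hwa : IsWeaklyAdditive μ)
    {x : K} (hx : ∀ f : C(K, ℝ), μ f ≤ f x) : {x} ∈ LFamily μ := by
  refine ⟨singleton_nonempty x, isClosed_singleton, fun B hB hxB ↦ ?_⟩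
  obtain ⟨g, hg0, hg1, hg01⟩ := exists_continuous_zero_one_of_isClosed isClosed_singleton hB
    (disjoint_iff_inter_eq_empty.2 hxB)
  have hgx : g x = 0 := hg0 rfl
  refine ⟨g, le_antisymm (hgx ▸ hx g) (hmono.map_nonneg (hwa.map_zero hnorm) fun y ↦ (hg01 y).1),
    fun y hy ↦ by rw [mem_singleton_iff.1 hy, hgx], fun y hy ↦ ?_⟩
  rw [hg1 hy]
  exact one_pos

theorem singleton_mem_LFamily_iff [CompactSpace K] [T2Space K] (hnorm : IsNormedFunctional μ)
    (hmono : IsMonotoneFunctional μ) (hwa : IsWeaklyAdditive μ) (hwmax : WeaklyPreservesMax μ)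
    (hwmin : WeaklyPreservesMin μ) {x : K} : {x} ∈ LFamily μ ↔ ∀ f : C(K, ℝ), μ f ≤ f x := by
  refine ⟨fun hx f ↦ ?_, singleton_mem_LFamily_of_forall_map_le hnorm hmono hwa⟩
  obtain ⟨y, rfl, hy⟩ := exists_map_le_apply_of_mem_LFamily hnorm hmono hwa hwmax hwmin hx f
  exact hy

theorem mem_functionalSupport_of_forall_map_le [T1Space K] [NormalSpace K]
    (hnorm : IsNormedFunctional μ) {x : K} (hx : ∀ f : C(K, ℝ), μ f ≤ f x) :
    x ∈ functionalSupport μ := by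
  intro O hO hxO
  obtain ⟨g, hg0, hg1, -⟩ := exists_continuous_zero_one_of_isClosed isClosed_singleton
    hO.isClosed_compl (disjoint_singleton_left.2 (not_not.2 hxO))
  refine ⟨g, 1, fun y hy ↦ hg1 hy, fun h ↦ ?_⟩
  have := hx g
  rw [h, hnorm, hg0 rfl] at this
  exact one_pos.not_ge this

theorem exists_mem_forall_map_le_of_mem_LFamily [CompactSpace K] (hnorm : IsNormedFunctional μ)
    (hmono : IsMonotoneFunctional μ) (hwa : IsWeaklyAdditive μ) (hwmax : WeaklyPreservesMax μ)
    (hwmin : WeaklyPreservesMin μ) (hmin : PreservesMin μ) {A : Set K} (hA : A ∈ LFamily μ) :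
    ∃ x ∈ A, ∀ f : C(K, ℝ), μ f ≤ f x := by
  set Z : C(K, ℝ) → Set K := fun f ↦ A ∩ f ⁻¹' Ici (μ f)
  have hZ : ∀ f, IsClosed (Z f) := fun f ↦ hA.2.1.inter (isClosed_Ici.preimage f.continuous)
  have hZne : ∀ f, (Z f).Nonempty := fun f ↦
    let ⟨x, hxA, hx⟩ := exists_map_le_apply_of_mem_LFamily hnorm hmono hwa hwmax hwmin hA f
    ⟨x, hxA, hx⟩
  have hZdir : Directed (· ⊇ ·) Z := fun f g ↦ by
    set k := (f + const K (-μ f)) ⊓ (g + const K (-μ g))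
    have hμk : μ k = 0 := by rw [hmin, hwa, hwa, add_neg_cancel, add_neg_cancel, min_self]
    have hk : ∀ y, μ k ≤ k y → μ f ≤ f y ∧ μ g ≤ g y := fun y hy ↦ by
      rw [hμk] at hy
      change 0 ≤ min (f y + -μ f) (g y + -μ g) at hy
      constructor <;> linarith [le_min_iff.1 hy]
    exact ⟨k, fun y hy ↦ ⟨hy.1, (hk y hy.2).1⟩, fun y hy ↦ ⟨hy.1, (hk y hy.2).2⟩⟩
  obtain ⟨x, hx⟩ := IsCompact.nonempty_iInter_of_directed_nonempty_isCompact_isClosed Z hZdir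
    hZne (fun f ↦ (hZ f).isCompact) hZ
  exact ⟨x, (mem_iInter.1 hx 0).1, fun f ↦ (mem_iInter.1 hx f).2⟩

theorem isClosed_setOf_singleton_mem_LFamily [CompactSpace K] [T2Space K]
    (hnorm : IsNormedFunctional μ) (hmono : IsMonotoneFunctional μ) (hwa : IsWeaklyAdditive μ)
    (hwmax : WeaklyPreservesMax μ) (hwmin : WeaklyPreservesMin μ) :
    IsClosed {x : K | {x} ∈ LFamily μ} := by
  have : {x : K | {x} ∈ LFamily μ} = ⋂ f : C(K, ℝ), f ⁻¹' Ici (μ f) := by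
    ext x
    simpa using singleton_mem_LFamily_iff hnorm hmono hwa hwmax hwmin
  rw [this]
  exact isClosed_iInter fun f ↦ isClosed_Ici.preimage f.continuous

theorem statement4_general {K : Type*} [TopologicalSpace K] [CompactSpace K] [T2Space K]
    (μ : C(K, ℝ) → ℝ) (hnorm : IsNormedFunctional μ) (hmono : IsMonotoneFunctional μ)
    (hwa : IsWeaklyAdditive μ) (hwmax : WeaklyPreservesMax μ) (hwmin : WeaklyPreservesMin μ) :
    IsClosed {x : K | {x} ∈ LFamily μ} ∧
    {x : K | {x} ∈ LFamily μ} ⊆ functionalSupport μ ∧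
    (PreservesMin μ → ∀ A ∈ LFamily μ, (A ∩ {x : K | {x} ∈ LFamily μ}).Nonempty) := by
  refine ⟨isClosed_setOf_singleton_mem_LFamily hnorm hmono hwa hwmax hwmin, fun x hx ↦ ?_,
    fun hmin A hA ↦ ?_⟩
  · exact mem_functionalSupport_of_forall_map_le hnorm
      ((singleton_mem_LFamily_iff hnorm hmono hwa hwmax hwmin).1 hx)
  · obtain ⟨x, hxA, hx⟩ :=
      exists_mem_forall_map_le_of_mem_LFamily hnorm hmono hwa hwmax hwmin hmin hA
    exact ⟨x, hxA, singleton_mem_LFamily_of_forall_map_le hnorm hmono hwa hx⟩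

/-- for a normed, monotone, weakly additive functional `μ` weakly preserving both
max and min, the set `s(μ) = {x : {x} ∈ Λ_μ}` is a closed subset of `S(μ)`; moreover, if `μ`
preserves min then every `A ∈ Λ_μ` meets `s(μ)`. -/
theorem statement4 {K : Type*} [TopologicalSpace K] [CompactSpace K] [T2Space K] [Nonempty K]
    (μ : C(K, ℝ) → ℝ) (hnorm : IsNormedFunctional μ) (hmono : IsMonotoneFunctional μ)
    (hwa : IsWeaklyAdditive μ) (hwmax : WeaklyPreservesMax μ) (hwmin : WeaklyPreservesMin μ) :
    IsClosed {x : K | {x} ∈ LFamily μ} ∧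
    {x : K | {x} ∈ LFamily μ} ⊆ functionalSupport μ ∧
    (PreservesMin μ → ∀ A ∈ LFamily μ, (A ∩ {x : K | {x} ∈ LFamily μ}).Nonempty) :=
  statement4_general μ hnorm hmono hwa hwmax hwmin
end

section
/- Let Y be a Tychonoff space and X ⊆ Y a subspace. The following are equivalent: (i) there exists a continuous (i.e. both lower and upper semicontinuous) compact-valued set-valued map r : Y → βX with r(x) = {η(x)} for all x ∈ X; (ii) there exists an extender u : C*(X) → C*(Y) which is normed, weakly additive, preserves min and weakly preserves max; (iii) there exists an extender u : C*(X) → C*(Y) which is normed, weakly additive, preserves max and weakly preserves min. -/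
/-!
For fixed `y`, the functional `φ F = u (F ∘ η) y` on `C(βX, ℝ)` is normed, commutes with adding
constants and with `⊓`, and with `⊔` against constants. Every such functional on a compact space
is the minimum over the closed set `{p | ∀ G, φ G ≤ G p}`: if `F ≤ φ F` forced `G < φ G`
everywhere, compactness would give a uniform gap, and comparing two truncations of `F` and `G`
contradicts it. So (ii) gives `r y` as this set, and conversely `u f y` is the minimum of the
extension of `f` over `r y`. Lower and upper semicontinuity of `r` are exactly what makes
`y ↦ min (F '' r y)` continuous, the converse going through Urysohn functions on `βX`.
Finally `f ↦ -u (-f)` exchanges (ii) and (iii).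
-/

open Set BoundedContinuousFunction

section MinFunctional

variable {K : Type*} [TopologicalSpace K]

structure IsMinFunctional (φ : C(K, ℝ) → ℝ) : Prop where
  map_one : φ 1 = 1
  map_add_const : ∀ F c, φ (F + .const K c) = φ F + c
  map_inf : ∀ F G, φ (F ⊓ G) = φ F ⊓ φ G
  map_sup_const : ∀ F c, φ (F ⊔ .const K c) = φ F ⊔ c

def minSupport (φ : C(K, ℝ) → ℝ) : Set K := {p | ∀ G, φ G ≤ G p}

lemma isClosed_minSupport (φ : C(K, ℝ) → ℝ) : IsClosed (minSupport φ) := by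
  simp only [minSupport, ofPred_forall]
  exact isClosed_iInter fun G => isClosed_le continuous_const G.continuous

namespace IsMinFunctional

variable {φ : C(K, ℝ) → ℝ} (hφ : IsMinFunctional φ)
include hφ

lemma map_const (c : ℝ) : φ (.const K c) = c := by
  have : ContinuousMap.const K c = 1 + .const K (c - 1) := by ext; simp
  rw [this, hφ.map_add_const, hφ.map_one]; ring

lemma map_inf_const (F : C(K, ℝ)) (c : ℝ) : φ (F ⊓ .const K c) = φ F ⊓ c := by
  rw [hφ.map_inf, hφ.map_const]

lemma monotone : Monotone φ := fun F G hFG => by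
  rw [← inf_eq_left.mpr hFG, hφ.map_inf]
  exact inf_le_right

/-- `φ` sends the truncations `(F ⊓ (φ F + η)) ⊔ φ F` and `(G ⊔ (φ G - η)) ⊓ φ G` to `φ F` and
`φ G`, while under the hypothesis the second one, shifted up by `φ F - φ G + η`, lies below the
first. -/
lemma not_forall_lt_add_imp_le_sub {η : ℝ} (hη : 0 < η) (F G : C(K, ℝ)) :
    ¬ ∀ p, F p < φ F + η → G p ≤ φ G - η := by
  intro h
  have hle : (G ⊔ .const K (φ G - η)) ⊓ .const K (φ G) + .const K (φ F - φ G + η) ≤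
      (F ⊓ .const K (φ F + η)) ⊔ .const K (φ F) := ContinuousMap.le_def.mpr fun p => by
    simp only [ContinuousMap.add_apply, ContinuousMap.inf_apply, ContinuousMap.sup_apply,
      ContinuousMap.const_apply]
    rcases lt_or_ge (F p) (φ F + η) with hp | hp
    · rw [sup_eq_right.mpr (h p hp), inf_eq_left.mpr (by linarith)]
      linarith [le_sup_right (a := F p ⊓ (φ F + η)) (b := φ F)]
    · rw [inf_eq_right.mpr hp, sup_eq_left.mpr (by linarith : φ F ≤ φ F + η)]
      linarith [inf_le_right (a := G p ⊔ (φ G - η)) (b := φ G)]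
  have := hφ.monotone hle
  rw [hφ.map_add_const, hφ.map_inf_const, hφ.map_sup_const, hφ.map_sup_const,
    hφ.map_inf_const, sup_eq_left.mpr (by linarith : φ G - η ≤ φ G), inf_idem,
    inf_eq_left.mpr (by linarith : φ F ≤ φ F + η), sup_idem] at this
  linarith

variable [CompactSpace K]

lemma exists_le_and_le (F G : C(K, ℝ)) : ∃ p, F p ≤ φ F ∧ φ G ≤ G p := by
  by_contra! h
  obtain ⟨η, hη, hη_le⟩ := isCompact_univ.exists_forall_le' (a := 0)
    (f := fun p => max (F p - φ F) (φ G - G p)) (by fun_prop)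
    fun p _ => lt_max_iff.mpr (or_iff_not_imp_left.mpr fun hp => by linarith [h p (by linarith)])
  refine hφ.not_forall_lt_add_imp_le_sub hη F G fun p hp => ?_
  have := hη_le p (mem_univ p)
  rw [le_max_iff] at this
  rcases this with h' | h' <;> linarith

/-- The closed sets `{p | φ G ≤ G p}` form a downward directed family, because
`{p | φ G₁ ≤ G₁ p} ∩ {p | φ G₂ ≤ G₂ p}` is the set `{p | φ G ≤ G p}` for
`G = (G₁ - φ G₁) ⊓ (G₂ - φ G₂)`. -/
lemma exists_mem_minSupport_le (F : C(K, ℝ)) : ∃ p ∈ minSupport φ, F p ≤ φ F := by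
  let t (G : C(K, ℝ)) : Set K := {p | φ G ≤ G p} ∩ {p | F p ≤ φ F}
  have ht_closed (G) : IsClosed (t G) :=
    (isClosed_le continuous_const G.continuous).inter (isClosed_le F.continuous continuous_const)
  have ht_dir : Directed (· ⊇ ·) t := fun G₁ G₂ => by
    refine ⟨(G₁ + .const K (-φ G₁)) ⊓ (G₂ + .const K (-φ G₂)), ?_, ?_⟩ <;>
    · rintro p ⟨hp, hpF⟩
      simp only [hφ.map_inf, hφ.map_add_const, add_neg_cancel, inf_idem, mem_ofPred_eq,
        ContinuousMap.inf_apply, ContinuousMap.add_apply, ContinuousMap.const_apply,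
        le_inf_iff] at hp
      exact ⟨by simp only [mem_ofPred_eq]; linarith [hp.1, hp.2], hpF⟩
  obtain ⟨p, hp⟩ := IsCompact.nonempty_iInter_of_directed_nonempty_isCompact_isClosed t ht_dir
    (fun G => (hφ.exists_le_and_le F G).imp fun _ h => ⟨h.2, h.1⟩)
    (fun G => (ht_closed G).isCompact) ht_closed
  rw [mem_iInter] at hp
  exact ⟨p, fun G => (hp G).1, (hp 0).2⟩

theorem isLeast_image_minSupport (F : C(K, ℝ)) : IsLeast (F '' minSupport φ) (φ F) := by
  obtain ⟨p, hp, hpF⟩ := hφ.exists_mem_minSupport_le F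
  exact ⟨⟨p, hp, le_antisymm hpF (hp F)⟩, forall_mem_image.mpr fun q hq => hq F⟩

end IsMinFunctional

lemma isMinFunctional_of_isLeast_image {s : Set K} {φ : C(K, ℝ) → ℝ}
    (h : ∀ F : C(K, ℝ), IsLeast (F '' s) (φ F)) : IsMinFunctional φ := by
  have hmono (F : C(K, ℝ)) {g : ℝ → ℝ} (hg : Monotone g) :
      IsLeast ((fun p => g (F p)) '' s) (g (φ F)) := by
    rw [← image_image]; exact hg.map_isLeast (h F)
  refine ⟨?_, fun F c => ?_, fun F G => ?_, fun F c => ?_⟩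
  · exact (h 1).unique (by simpa using hmono 0 (g := fun _ => 1) monotone_const)
  · exact (h _).unique (hmono F (g := (· + c)) fun _ _ => by simp)
  · refine (h _).unique ⟨?_, forall_mem_image.mpr fun p hp => ?_⟩
    · rcases le_total (φ F) (φ G) with hFG | hGF
      · obtain ⟨p, hp, hpF⟩ := (h F).1
        refine ⟨p, hp, ?_⟩
        rw [ContinuousMap.inf_apply, hpF, inf_eq_left.mpr hFG,
          inf_eq_left.mpr (hFG.trans ((h G).2 (mem_image_of_mem G hp)))]
      · obtain ⟨p, hp, hpG⟩ := (h G).1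
        refine ⟨p, hp, ?_⟩
        rw [ContinuousMap.inf_apply, hpG, inf_eq_right.mpr hGF,
          inf_eq_right.mpr (hGF.trans ((h F).2 (mem_image_of_mem F hp)))]
    · exact inf_le_inf ((h F).2 (mem_image_of_mem F hp)) ((h G).2 (mem_image_of_mem G hp))
  · exact (h _).unique (hmono F (g := (· ⊔ c)) fun _ _ h => sup_le_sup_right h c)

lemma minSupport_eval [T1Space K] [NormalSpace K] (q : K) :
    minSupport (fun F : C(K, ℝ) => F q) = {q} := by
  refine eq_singleton_iff_unique_mem.mpr ⟨fun G => le_rfl, fun p hp => ?_⟩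
  by_contra hpq
  obtain ⟨G, hGp, hGq, -⟩ := exists_continuous_zero_one_of_isClosed isClosed_singleton
    isClosed_singleton (disjoint_singleton.mpr hpq)
  have : G q ≤ G p := hp G
  rw [hGp rfl, hGq rfl] at this
  exact zero_lt_one.not_ge this

end MinFunctional

section SetValued

variable {Y K : Type*} [TopologicalSpace Y] [TopologicalSpace K] {r : Y → Set K}

lemma continuous_of_isLeast_image
    (hl : ∀ U : Set K, IsOpen U → IsOpen {y | (r y ∩ U).Nonempty})
    (hu : ∀ U : Set K, IsOpen U → IsOpen {y | r y ⊆ U})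
    {F : K → ℝ} (hF : Continuous F) {m : Y → ℝ} (hm : ∀ y, IsLeast (F '' r y) (m y)) :
    Continuous m := by
  refine continuous_iff_lower_upperSemicontinuous.mpr
    ⟨lowerSemicontinuous_iff_isOpen_preimage.mpr fun a => ?_,
      upperSemicontinuous_iff_isOpen_preimage.mpr fun a => ?_⟩
  · convert hu _ (isOpen_lt continuous_const hF) using 1
    ext y
    refine ⟨fun ha p hp => ha.trans_le ((hm y).2 (mem_image_of_mem F hp)), fun h => ?_⟩
    obtain ⟨p, hp, hpm⟩ := (hm y).1
    exact show a < m y from hpm ▸ (h hp : a < F p)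
  · convert hl _ (isOpen_lt hF continuous_const) using 1
    ext y
    refine ⟨fun ha => ?_, fun ⟨p, hp, hpa⟩ => ((hm y).2 (mem_image_of_mem F hp)).trans_lt hpa⟩
    obtain ⟨p, hp, hpm⟩ := (hm y).1
    exact ⟨p, hp, show F p < a from hpm ▸ ha⟩

variable [NormalSpace K] {m : C(K, ℝ) → Y → ℝ} (hc : ∀ F : C(K, ℝ), Continuous (m F))
  (hm : ∀ (F : C(K, ℝ)) y, IsLeast (F '' r y) (m F y))
include hc hm

lemma isOpen_setOf_inter_nonempty_of_isLeast_image [T1Space K] {U : Set K} (hU : IsOpen U) :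
    IsOpen {y | (r y ∩ U).Nonempty} := by
  refine isOpen_iff_forall_mem_open.mpr fun y₀ ⟨p₀, hp₀, hp₀U⟩ => ?_
  obtain ⟨G, hG₀, hG₁, -⟩ := exists_continuous_zero_one_of_isClosed isClosed_singleton
    hU.isClosed_compl (disjoint_singleton_left.mpr (not_not.mpr hp₀U))
  refine ⟨{y | m G y < 1}, fun y hy => ?_, isOpen_lt (hc G) continuous_const, ?_⟩
  · obtain ⟨p, hp, hpG⟩ := (hm G y).1
    refine ⟨p, hp, by_contra fun hpU => ?_⟩
    rw [mem_ofPred_eq, ← hpG, hG₁ hpU] at hy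
    exact lt_irrefl _ hy
  · have := (hm G y₀).2 (mem_image_of_mem G hp₀)
    rw [hG₀ rfl] at this
    exact this.trans_lt one_pos

lemma isOpen_setOf_subset_of_isLeast_image (hr : ∀ y, IsClosed (r y)) {U : Set K}
    (hU : IsOpen U) : IsOpen {y | r y ⊆ U} := by
  refine isOpen_iff_forall_mem_open.mpr fun y₀ hy₀ => ?_
  obtain ⟨G, hG₀, hG₁, -⟩ := exists_continuous_zero_one_of_isClosed hU.isClosed_compl (hr y₀)
    (disjoint_compl_left_iff_subset.mpr hy₀)
  refine ⟨{y | 0 < m G y}, fun y hy p hp => by_contra fun hpU => ?_,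
    isOpen_lt continuous_const (hc G), ?_⟩
  · have := (hm G y).2 (mem_image_of_mem G hp)
    rw [hG₀ hpU] at this
    exact (hy.trans_le this).false
  · obtain ⟨p, hp, hpG⟩ := (hm G y₀).1
    show 0 < m G y₀
    rw [← hpG, hG₁ hp]
    exact one_pos

end SetValued

namespace BoundedContinuousFunction

variable {X : Type*} [TopologicalSpace X]

lemma neg_one_eq_one_add_const : (-1 : X →ᵇ ℝ) = 1 + const X (-2) := by
  ext; norm_num

lemma neg_add_const (f : X →ᵇ ℝ) (c : ℝ) : -(f + const X c) = -f + const X (-c) := by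
  rw [neg_add]; rfl

lemma neg_inf_const (f : X →ᵇ ℝ) (c : ℝ) : -(f ⊓ const X c) = -f ⊔ const X (-c) := by
  rw [neg_inf]; rfl

lemma neg_sup_const (f : X →ᵇ ℝ) (c : ℝ) : -(f ⊔ const X c) = -f ⊓ const X (-c) := by
  rw [neg_sup]; rfl

noncomputable def stoneCechEquiv : (X →ᵇ ℝ) ≃ C(StoneCech X, ℝ) where
  toFun f :=
    have hf : Continuous fun x => (⟨f x, abs_le.mp (f.norm_coe_le_norm x)⟩ : Icc (-‖f‖) ‖f‖) :=
      f.continuous.subtype_mk _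
    ⟨Subtype.val ∘ stoneCechExtend hf, continuous_subtype_val.comp (continuous_stoneCechExtend hf)⟩
  invFun F := (mkOfCompact F).compContinuous ⟨stoneCechUnit, continuous_stoneCechUnit⟩
  left_inv _ := ext fun x => congrArg Subtype.val (stoneCechExtend_stoneCechUnit _ x)
  right_inv F := DFunLike.coe_injective <| stoneCech_hom_ext (map_continuous _) F.continuous <|
    funext fun x => congrArg Subtype.val (stoneCechExtend_stoneCechUnit _ x)

@[simp]
lemma stoneCechEquiv_apply_stoneCechUnit (f : X →ᵇ ℝ) (x : X) :
    stoneCechEquiv f (stoneCechUnit x) = f x :=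
  congrArg Subtype.val (stoneCechExtend_stoneCechUnit _ x)

@[simp]
lemma stoneCechEquiv_symm_one : stoneCechEquiv.symm (1 : C(StoneCech X, ℝ)) = 1 :=
  rfl

@[simp]
lemma stoneCechEquiv_symm_add_const (F : C(StoneCech X, ℝ)) (c : ℝ) :
    stoneCechEquiv.symm (F + .const _ c) = stoneCechEquiv.symm F + const X c :=
  rfl

@[simp]
lemma stoneCechEquiv_symm_inf (F G : C(StoneCech X, ℝ)) :
    stoneCechEquiv.symm (F ⊓ G) = stoneCechEquiv.symm F ⊓ stoneCechEquiv.symm G :=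
  rfl

@[simp]
lemma stoneCechEquiv_symm_sup_const (F : C(StoneCech X, ℝ)) (c : ℝ) :
    stoneCechEquiv.symm (F ⊔ .const _ c) = stoneCechEquiv.symm F ⊔ const X c :=
  rfl

end BoundedContinuousFunction

section Extenders

variable {X : Type*} [TopologicalSpace X]

lemma isMinFunctional_comp_stoneCechEquiv_symm_iff {v : (X →ᵇ ℝ) → ℝ} :
    IsMinFunctional (fun F => v (stoneCechEquiv.symm F)) ↔
      v 1 = 1 ∧ (∀ f c, v (f + const X c) = v f + c) ∧ (∀ f g, v (f ⊓ g) = v f ⊓ v g) ∧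
        ∀ f c, v (f ⊔ const X c) = v f ⊔ c := by
  refine ⟨fun h => ⟨?_, fun f c => ?_, fun f g => ?_, fun f c => ?_⟩,
    fun ⟨h₁, h₂, h₃, h₄⟩ => ⟨?_, fun F c => ?_, fun F G => ?_, fun F c => ?_⟩⟩
  · simpa using h.map_one
  · simpa using h.map_add_const (stoneCechEquiv f) c
  · simpa using h.map_inf (stoneCechEquiv f) (stoneCechEquiv g)
  · simpa using h.map_sup_const (stoneCechEquiv f) c
  · simpa using h₁
  · simpa using h₂ _ c
  · simpa using h₃ _ _
  · simpa using h₄ _ c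

variable {Y : Type*} [TopologicalSpace Y]

def IsContinuousMultiExtension (ι : X → Y) (r : Y → Set (StoneCech X)) : Prop :=
  (∀ y, (r y).Nonempty ∧ IsCompact (r y)) ∧
    (∀ U : Set (StoneCech X), IsOpen U → IsOpen {y | (r y ∩ U).Nonempty}) ∧
    (∀ U : Set (StoneCech X), IsOpen U → IsOpen {y | r y ⊆ U}) ∧
    ∀ x, r (ι x) = {stoneCechUnit x}

def IsMinExtender (ι : X → Y) (u : (X →ᵇ ℝ) → (Y →ᵇ ℝ)) : Prop :=
  (∀ f x, u f (ι x) = f x) ∧ u 1 = 1 ∧ (∀ f c, u (f + const X c) = u f + const Y c) ∧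
    (∀ f g, u (f ⊓ g) = u f ⊓ u g) ∧ ∀ f c, u (f ⊔ const X c) = u f ⊔ const Y c

def IsMaxExtender (ι : X → Y) (u : (X →ᵇ ℝ) → (Y →ᵇ ℝ)) : Prop :=
  (∀ f x, u f (ι x) = f x) ∧ u 1 = 1 ∧ (∀ f c, u (f + const X c) = u f + const Y c) ∧
    (∀ f g, u (f ⊔ g) = u f ⊔ u g) ∧ ∀ f c, u (f ⊓ const X c) = u f ⊓ const Y c

variable {ι : X → Y}

theorem IsContinuousMultiExtension.exists_isMinExtender {r : Y → Set (StoneCech X)}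
    (hr : IsContinuousMultiExtension ι r) : ∃ u, IsMinExtender ι u := by
  obtain ⟨hr_cpt, hl, hu, hι⟩ := hr
  let m (F : C(StoneCech X, ℝ)) (y : Y) : ℝ := sInf (F '' r y)
  have hm (F : C(StoneCech X, ℝ)) (y : Y) : IsLeast (F '' r y) (m F y) :=
    ((hr_cpt y).2.image F.continuous).isLeast_sInf ((hr_cpt y).1.image F)
  have hv (y : Y) :=
    (isMinFunctional_comp_stoneCechEquiv_symm_iff (v := fun f => m (stoneCechEquiv f) y)).mp <| by
      simpa using isMinFunctional_of_isLeast_image (hm · y)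
  let u (f : X →ᵇ ℝ) : Y →ᵇ ℝ :=
    ofNormedAddCommGroup (m (stoneCechEquiv f))
      (continuous_of_isLeast_image hl hu (map_continuous _) (hm _)) ‖stoneCechEquiv f‖ fun y => by
        obtain ⟨p, -, hp⟩ := (hm (stoneCechEquiv f) y).1
        exact hp ▸ (stoneCechEquiv f).norm_coe_le_norm p
  refine ⟨u, fun f x => ?_, ext fun y => (hv y).1, fun f c => ext fun y => (hv y).2.1 f c,
    fun f g => ext fun y => (hv y).2.2.1 f g, fun f c => ext fun y => (hv y).2.2.2 f c⟩
  have := hm (stoneCechEquiv f) (ι x)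
  rw [hι, image_singleton, stoneCechEquiv_apply_stoneCechUnit] at this
  exact isLeast_singleton.unique this |>.symm

theorem IsMinExtender.exists_isContinuousMultiExtension {u : (X →ᵇ ℝ) → (Y →ᵇ ℝ)}
    (hu : IsMinExtender ι u) : ∃ r, IsContinuousMultiExtension ι r := by
  obtain ⟨hext, hone, hadd, hinf, hsup⟩ := hu
  let φ (y : Y) (F : C(StoneCech X, ℝ)) : ℝ := u (stoneCechEquiv.symm F) y
  have hφ (y : Y) : IsMinFunctional (φ y) :=
    (isMinFunctional_comp_stoneCechEquiv_symm_iff (v := (u · y))).mpr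
      ⟨congr($hone y), fun f c => congr($(hadd f c) y), fun f g => congr($(hinf f g) y),
        fun f c => congr($(hsup f c) y)⟩
  have hm (F : C(StoneCech X, ℝ)) (y : Y) : IsLeast (F '' minSupport (φ y)) (φ y F) :=
    (hφ y).isLeast_image_minSupport F
  have hc (F : C(StoneCech X, ℝ)) : Continuous fun y => φ y F := (u _).continuous
  refine ⟨fun y => minSupport (φ y),
    fun y => ⟨(hm 0 y).nonempty.of_image, (isClosed_minSupport _).isCompact⟩,
    fun U => isOpen_setOf_inter_nonempty_of_isLeast_image hc hm,
    fun U => isOpen_setOf_subset_of_isLeast_image hc hm fun y => isClosed_minSupport _,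
    fun x => ?_⟩
  have : φ (ι x) = fun F => F (stoneCechUnit x) := funext fun F => hext _ x
  simp only [this, minSupport_eval]

theorem IsMinExtender.neg {u : (X →ᵇ ℝ) → (Y →ᵇ ℝ)} (hu : IsMinExtender ι u) :
    IsMaxExtender ι fun f => -u (-f) := by
  obtain ⟨hext, hone, hadd, hinf, hsup⟩ := hu
  refine ⟨fun f x => by simp [hext], ?_, fun f c => ?_, fun f g => ?_, fun f c => ?_⟩
  · dsimp only; rw [neg_one_eq_one_add_const, hadd, hone]; ext; norm_num
  · dsimp only; rw [neg_add_const, hadd, neg_add_const, neg_neg]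
  · dsimp only; rw [neg_sup, hinf, neg_inf]
  · dsimp only; rw [neg_inf_const, hsup, neg_sup_const, neg_neg]

theorem IsMaxExtender.neg {u : (X →ᵇ ℝ) → (Y →ᵇ ℝ)} (hu : IsMaxExtender ι u) :
    IsMinExtender ι fun f => -u (-f) := by
  obtain ⟨hext, hone, hadd, hsup, hinf⟩ := hu
  refine ⟨fun f x => by simp [hext], ?_, fun f c => ?_, fun f g => ?_, fun f c => ?_⟩
  · dsimp only; rw [neg_one_eq_one_add_const, hadd, hone]; ext; norm_num
  · dsimp only; rw [neg_add_const, hadd, neg_add_const, neg_neg]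
  · dsimp only; rw [neg_inf, hsup, neg_sup]
  · dsimp only; rw [neg_sup_const, hinf, neg_inf_const, neg_neg]

end Extenders

theorem statement14_general {Y : Type*} [TopologicalSpace Y] (X : Set Y) :
    ((∃ r : Y → Set (StoneCech X),
        (∀ y, (r y).Nonempty ∧ IsCompact (r y)) ∧
        (∀ U : Set (StoneCech X), IsOpen U → IsOpen {y | (r y ∩ U).Nonempty}) ∧
        (∀ U : Set (StoneCech X), IsOpen U → IsOpen {y | r y ⊆ U}) ∧
        (∀ x : X, r x = {stoneCechUnit x})) ↔
      (∃ u : BoundedContinuousFunction X ℝ → BoundedContinuousFunction Y ℝ,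
        (∀ (f : BoundedContinuousFunction X ℝ) (x : X), u f x = f x) ∧
        u 1 = 1 ∧
        (∀ (f : BoundedContinuousFunction X ℝ) (c : ℝ),
          u (f + BoundedContinuousFunction.const X c) =
            u f + BoundedContinuousFunction.const Y c) ∧
        (∀ f g : BoundedContinuousFunction X ℝ, u (f ⊓ g) = u f ⊓ u g) ∧
        (∀ (f : BoundedContinuousFunction X ℝ) (c : ℝ),
          u (f ⊔ BoundedContinuousFunction.const X c) =
            u f ⊔ BoundedContinuousFunction.const Y c))) ∧
    ((∃ r : Y → Set (StoneCech X),
        (∀ y, (r y).Nonempty ∧ IsCompact (r y)) ∧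
        (∀ U : Set (StoneCech X), IsOpen U → IsOpen {y | (r y ∩ U).Nonempty}) ∧
        (∀ U : Set (StoneCech X), IsOpen U → IsOpen {y | r y ⊆ U}) ∧
        (∀ x : X, r x = {stoneCechUnit x})) ↔
      (∃ u : BoundedContinuousFunction X ℝ → BoundedContinuousFunction Y ℝ,
        (∀ (f : BoundedContinuousFunction X ℝ) (x : X), u f x = f x) ∧
        u 1 = 1 ∧
        (∀ (f : BoundedContinuousFunction X ℝ) (c : ℝ),
          u (f + BoundedContinuousFunction.const X c) =
            u f + BoundedContinuousFunction.const Y c) ∧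
        (∀ f g : BoundedContinuousFunction X ℝ, u (f ⊔ g) = u f ⊔ u g) ∧
        (∀ (f : BoundedContinuousFunction X ℝ) (c : ℝ),
          u (f ⊓ BoundedContinuousFunction.const X c) =
            u f ⊓ BoundedContinuousFunction.const Y c))) := by
  have h_min : (∃ r, IsContinuousMultiExtension ((↑) : X → Y) r) ↔
      ∃ u, IsMinExtender ((↑) : X → Y) u :=
    ⟨fun ⟨_, hr⟩ => hr.exists_isMinExtender, fun ⟨_, hu⟩ => hu.exists_isContinuousMultiExtension⟩
  have h_max : (∃ u, IsMinExtender ((↑) : X → Y) u) ↔ ∃ u, IsMaxExtender ((↑) : X → Y) u :=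
    ⟨fun ⟨_, hu⟩ => ⟨_, hu.neg⟩, fun ⟨_, hu⟩ => ⟨_, hu.neg⟩⟩
  exact ⟨h_min, h_min.trans h_max⟩

/-- for a subspace `X ⊆ Y`, the following are equivalent: (i) there is a
continuous (lower and upper semicontinuous) compact-valued map `r : Y → βX` with
`r x = {η x}` for `x ∈ X`; (ii) there is a normed, weakly additive extender
`u : C*(X) → C*(Y)` preserving min and weakly preserving max; (iii) there is a normed,
weakly additive extender `u : C*(X) → C*(Y)` preserving max and weakly preserving min. -/
theorem statement14 {Y : Type*} [TopologicalSpace Y] [T35Space Y] (X : Set Y) :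
    ((∃ r : Y → Set (StoneCech X),
        (∀ y, (r y).Nonempty ∧ IsCompact (r y)) ∧
        (∀ U : Set (StoneCech X), IsOpen U → IsOpen {y | (r y ∩ U).Nonempty}) ∧
        (∀ U : Set (StoneCech X), IsOpen U → IsOpen {y | r y ⊆ U}) ∧
        (∀ x : X, r x = {stoneCechUnit x})) ↔
      (∃ u : BoundedContinuousFunction X ℝ → BoundedContinuousFunction Y ℝ,
        (∀ (f : BoundedContinuousFunction X ℝ) (x : X), u f x = f x) ∧
        u 1 = 1 ∧
        (∀ (f : BoundedContinuousFunction X ℝ) (c : ℝ),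
          u (f + BoundedContinuousFunction.const X c) =
            u f + BoundedContinuousFunction.const Y c) ∧
        (∀ f g : BoundedContinuousFunction X ℝ, u (f ⊓ g) = u f ⊓ u g) ∧
        (∀ (f : BoundedContinuousFunction X ℝ) (c : ℝ),
          u (f ⊔ BoundedContinuousFunction.const X c) =
            u f ⊔ BoundedContinuousFunction.const Y c))) ∧
    ((∃ r : Y → Set (StoneCech X),
        (∀ y, (r y).Nonempty ∧ IsCompact (r y)) ∧
        (∀ U : Set (StoneCech X), IsOpen U → IsOpen {y | (r y ∩ U).Nonempty}) ∧
        (∀ U : Set (StoneCech X), IsOpen U → IsOpen {y | r y ⊆ U}) ∧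
        (∀ x : X, r x = {stoneCechUnit x})) ↔
      (∃ u : BoundedContinuousFunction X ℝ → BoundedContinuousFunction Y ℝ,
        (∀ (f : BoundedContinuousFunction X ℝ) (x : X), u f x = f x) ∧
        u 1 = 1 ∧
        (∀ (f : BoundedContinuousFunction X ℝ) (c : ℝ),
          u (f + BoundedContinuousFunction.const X c) =
            u f + BoundedContinuousFunction.const Y c) ∧
        (∀ f g : BoundedContinuousFunction X ℝ, u (f ⊔ g) = u f ⊔ u g) ∧
        (∀ (f : BoundedContinuousFunction X ℝ) (c : ℝ),
          u (f ⊓ BoundedContinuousFunction.const X c) =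
            u f ⊓ BoundedContinuousFunction.const Y c))) :=
  statement14_general X
end
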